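/- arXiv:2211.11693 — 6 statements merged into one kernel-verified Lean document; each statement's English description precedes it below -/
import Mathlib

section
/- For every positive integer n, every real d with 0 ≤ d ≤ 2, and every vector v ∈ ℝⁿ with ‖v‖ = d (Euclidean norm), the volume of the intersection of the closed unit Euclidean ball B with its translate B + v satisfies vol(B ∩ (B + v)) / vol(B) ≥ √(1/(2πn)) · (1 − d²/4)^((n+1)/2), where vol denotes n-dimensional Lebesgue measure. -/
/-!
The lens `B ∩ (B + v)`, with `‖v‖ = d`, contains the ellipsoid centred at `v / 2` with
semi-axis `a` along `v` and `b` in the orthogonal directions as soon as the ellipse with centre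
`(d / 2, 0)` and semi-axes `a, b` lies in the unit disc; its volume is `a b^(n-1) vol B`.
With `m = 1 - d² / 4`, the choice `b² = λ m`, `a² = λ (1 - λ) m²` fits for every `λ ∈ [0, 1]`
and gives `a b^(n-1) = √(1 - λ) λ^(n/2) m^((n+1)/2)`. Taking `λ = n / (n + 1)` and using
`(1 + 1/n)^n ≤ e < π` yields the constant `√(1 / (2πn))`.
-/

open MeasureTheory Metric Real Pointwise

theorem one_div_two_pi_mul_le {n : ℕ} (hn : 0 < n) :
    1 / (2 * π * n) ≤ (1 - n / (n + 1)) * (n / (n + 1) : ℝ) ^ n := by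
  have hn1 : (1 : ℝ) ≤ n := by exact_mod_cast hn
  have hpow : (n / (n + 1) : ℝ) ^ n = ((1 + (n : ℝ)⁻¹) ^ n)⁻¹ := by
    rw [← inv_pow]; congr 1; field_simp
  have hsub : 1 - n / (n + 1) = 1 / (n + 1 : ℝ) := by field_simp; ring
  rw [hpow, hsub, one_div_mul_eq_div, inv_div_left, ← one_div]
  calc 1 / (2 * π * n) ≤ 1 / ((n + 1) * exp 1) :=
        one_div_le_one_div_of_le (by positivity)
          (by nlinarith [exp_one_lt_d9, pi_gt_three, exp_pos 1])
    _ ≤ 1 / ((n + 1) * (1 + (n : ℝ)⁻¹) ^ n) := by gcongr; exact one_add_inv_pow_le_exp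

theorem quadratic_nonneg_of_sq_le {A B C : ℝ} (hA : 0 ≤ A) (hC : 0 ≤ C)
    (hB : B ^ 2 ≤ 4 * A * C) (t : ℝ) : 0 ≤ A * t ^ 2 - B * t + C := by
  rcases hA.eq_or_lt with rfl | hA
  · nlinarith
  · nlinarith [sq_nonneg (2 * A * t - B)]

/-- With `t = cos θ`: the ellipse `(d/2 + a cos θ, b sin θ)` lies in the unit disc. -/
theorem half_add_mul_sq_add_sq_mul_le_one {d m l a b : ℝ} (hdm : d ^ 2 / 4 + m = 1)
    (hm : 0 ≤ m) (hl0 : 0 ≤ l) (hl1 : l ≤ 1) (ha : a ^ 2 = l * (1 - l) * m ^ 2)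
    (hb : b ^ 2 = l * m) (t : ℝ) :
    (d / 2 + a * t) ^ 2 + b ^ 2 * (1 - t ^ 2) ≤ 1 := by
  have hlm : 0 ≤ 1 - (1 - l) * m := by nlinarith
  have h1l : 0 ≤ 1 - l := by linarith
  have hA : b ^ 2 - a ^ 2 = l * m * (1 - (1 - l) * m) := by rw [ha, hb]; ring
  have hB : (d * a) ^ 2 =
      4 * (l * m * (1 - (1 - l) * m)) * ((1 - l) * m) - 4 * l ^ 2 * (1 - l) * m ^ 3 := by
    rw [mul_pow, ha, show d ^ 2 = 4 * (1 - m) by linarith]; ring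
  have := quadratic_nonneg_of_sq_le (A := b ^ 2 - a ^ 2) (B := d * a) (C := (1 - l) * m)
    (by rw [hA]; positivity) (by positivity)
    (by rw [hA, hB, sub_le_self_iff]; positivity) t
  nlinarith

section Rotation

variable {E : Type*} [NormedAddCommGroup E] [InnerProductSpace ℝ E] [FiniteDimensional ℝ E]
  [MeasurableSpace E] [BorelSpace E]

theorem volume_closedBall_inter_closedBall_eq_of_norm_eq {v w : E} (h : ‖v‖ = ‖w‖)
    (r s : ℝ) :
    volume (closedBall (0 : E) r ∩ closedBall v s) =
      volume (closedBall (0 : E) r ∩ closedBall w s) := by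
  set f := (ℝ ∙ (v - w))ᗮ.reflection
  have hpre : f ⁻¹' (closedBall 0 r ∩ closedBall w s) = closedBall 0 r ∩ closedBall v s := by
    rw [Set.preimage_inter, ← Submodule.reflection_sub h, f.isometry.preimage_closedBall]
    simp
  rw [← hpre, f.measurePreserving.measure_preimage
    (measurableSet_closedBall.inter measurableSet_closedBall).nullMeasurableSet]

end Rotation

namespace EuclideanSpace

variable {ι : Type*} [Fintype ι] [DecidableEq ι] (i : ι) (a b : ℝ)

noncomputable def axisScaling : EuclideanSpace ℝ ι →ₗ[ℝ] EuclideanSpace ℝ ι :=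
  Matrix.toLpLin 2 2 (Matrix.diagonal (Function.update (fun _ ↦ b) i a))

theorem axisScaling_apply (y : EuclideanSpace ℝ ι) (j : ι) :
    axisScaling i a b y j = Function.update (fun _ ↦ b) i a j * y j := by
  simp [axisScaling, Matrix.toLpLin_apply, Matrix.mulVec_diagonal]

theorem det_axisScaling : LinearMap.det (axisScaling i a b) = a * b ^ (Fintype.card ι - 1) := by
  rw [axisScaling, LinearMap.det_toLpLin, Matrix.det_diagonal,
    Finset.prod_update_of_mem (Finset.mem_univ i), Finset.prod_const,
    ← Finset.compl_eq_univ_sdiff, Finset.card_compl, Finset.card_singleton]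

theorem norm_sq_smul_single_add_axisScaling (p : ℝ) (y : EuclideanSpace ℝ ι) :
    ‖p • single i 1 + axisScaling i a b y‖ ^ 2 =
      (p + a * y i) ^ 2 + b ^ 2 * (‖y‖ ^ 2 - y i ^ 2) := by
  set x : EuclideanSpace ℝ ι := p • single i 1 + axisScaling i a b y
  have hdiff : ∑ j, (x j ^ 2 - b ^ 2 * y j ^ 2) = (p + a * y i) ^ 2 - b ^ 2 * y i ^ 2 := by
    rw [Finset.sum_eq_single i]
    · simp [x, axisScaling_apply]
    · intro j _ hj
      simp [x, axisScaling_apply, hj]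
      ring
    · simp
  simp only [norm_sq_eq, Real.norm_eq_abs, sq_abs, Finset.sum_sub_distrib, ← Finset.mul_sum]
    at hdiff ⊢
  linarith

theorem vadd_image_axisScaling_closedBall_subset {d : ℝ}
    (hfit : ∀ t, (d / 2 + a * t) ^ 2 + b ^ 2 * (1 - t ^ 2) ≤ 1) :
    (d / 2) • single i (1 : ℝ) +ᵥ axisScaling i a b '' closedBall 0 1 ⊆
      closedBall 0 1 ∩ closedBall (d • single i 1) 1 := by
  rintro _ ⟨_, ⟨y, hy, rfl⟩, rfl⟩
  have hby : b ^ 2 * ‖y‖ ^ 2 ≤ b ^ 2 := mul_le_of_le_one_right (sq_nonneg b)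
    (pow_le_one₀ (norm_nonneg y) (mem_closedBall_zero_iff.1 hy))
  simp only [vadd_eq_add]
  constructor
  · rw [mem_closedBall_zero_iff, ← sq_le_one_iff₀ (norm_nonneg _),
      norm_sq_smul_single_add_axisScaling]
    linarith [hfit (y i)]
  · rw [mem_closedBall, dist_eq_norm, ← sq_le_one_iff₀ (norm_nonneg _),
      show (d / 2) • single i 1 + axisScaling i a b y - d • single i 1 =
        (-(d / 2)) • single i 1 + axisScaling i a b y by module,
      norm_sq_smul_single_add_axisScaling]
    linarith [hfit (-y i)]

theorem volume_vadd_image_axisScaling (c : EuclideanSpace ℝ ι)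
    (s : Set (EuclideanSpace ℝ ι)) :
    volume (c +ᵥ axisScaling i a b '' s) =
      ENNReal.ofReal |a * b ^ (Fintype.card ι - 1)| * volume s := by
  rw [measure_vadd, Measure.addHaar_image_linearMap, det_axisScaling]

end EuclideanSpace

open EuclideanSpace in
theorem mul_pow_le_volume_closedBall_inter_div {ι : Type*} [Fintype ι] (i : ι) {d a b : ℝ}
    (ha : 0 ≤ a) (hb : 0 ≤ b) (hfit : ∀ t, (d / 2 + a * t) ^ 2 + b ^ 2 * (1 - t ^ 2) ≤ 1)
    {v : EuclideanSpace ℝ ι} (hv : ‖v‖ = d) :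
    a * b ^ (Fintype.card ι - 1) ≤
      (volume (closedBall 0 1 ∩ closedBall v 1)).toReal /
        (volume (closedBall (0 : EuclideanSpace ℝ ι) 1)).toReal := by
  classical
  set B : Set (EuclideanSpace ℝ ι) := closedBall 0 1
  have hw : ‖v‖ = ‖d • single i (1 : ℝ)‖ := by
    rw [hv]; simp [norm_smul, abs_of_nonneg (hv ▸ norm_nonneg v : 0 ≤ d)]
  have hB : 0 < (volume B).toReal :=
    ENNReal.toReal_pos (measure_closedBall_pos volume _ one_pos).ne' measure_closedBall_lt_top.ne
  rw [le_div_iff₀ hB, volume_closedBall_inter_closedBall_eq_of_norm_eq hw]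
  calc a * b ^ (Fintype.card ι - 1) * (volume B).toReal
      = (volume ((d / 2) • single i (1 : ℝ) +ᵥ axisScaling i a b '' B)).toReal := by
        rw [volume_vadd_image_axisScaling, ENNReal.toReal_mul,
          ENNReal.toReal_ofReal (abs_nonneg _), abs_of_nonneg (by positivity)]
    _ ≤ (volume (B ∩ closedBall (d • single i (1 : ℝ)) 1)).toReal :=
        ENNReal.toReal_mono
          (measure_ne_top_of_subset Set.inter_subset_left measure_closedBall_lt_top.ne)
          (measure_mono (vadd_image_axisScaling_closedBall_subset i a b hfit))

theorem ball_intersection_volume_lower_bound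
    (n : ℕ) (hn : 0 < n) (d : ℝ) (hd0 : 0 ≤ d) (hd2 : d ≤ 2)
    (v : EuclideanSpace ℝ (Fin n)) (hv : ‖v‖ = d) :
    (volume (Metric.closedBall (0 : EuclideanSpace ℝ (Fin n)) 1 ∩
        Metric.closedBall v 1)).toReal /
      (volume (Metric.closedBall (0 : EuclideanSpace ℝ (Fin n)) 1)).toReal ≥
      Real.sqrt (1 / (2 * Real.pi * n)) * (1 - d ^ 2 / 4) ^ (((n : ℝ) + 1) / 2) := by
  have hm : 0 ≤ 1 - d ^ 2 / 4 := by nlinarith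
  set m := 1 - d ^ 2 / 4
  set l : ℝ := n / (n + 1)
  have hl0 : 0 ≤ l := by positivity
  have hl1 : l ≤ 1 := div_le_one_of_le₀ (by linarith) (by positivity)
  have hfit := half_add_mul_sq_add_sq_mul_le_one (a := √l * √(1 - l) * m) (b := √l * √m)
    (by ring) hm hl0 hl1 (by rw [mul_pow, mul_pow, sq_sqrt hl0, sq_sqrt (by linarith)])
    (by rw [mul_pow, sq_sqrt hl0, sq_sqrt hm])
  have hratio := mul_pow_le_volume_closedBall_inter_div ⟨0, hn⟩ (by positivity) (by positivity)
    hfit hv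
  rw [Fintype.card_fin] at hratio
  have hnum : √(1 / (2 * π * n)) ≤ √(1 - l) * √l ^ n := by
    rw [sqrt_le_left (by positivity), mul_pow, ← pow_mul, mul_comm n, pow_mul, sq_sqrt hl0,
      sq_sqrt (by linarith)]
    exact one_div_two_pi_mul_le hn
  refine le_trans ?_ hratio
  obtain ⟨k, rfl⟩ : ∃ k, n = k + 1 := ⟨n - 1, by omega⟩
  calc √(1 / (2 * π * (k + 1 : ℕ))) * m ^ ((((k + 1 : ℕ) : ℝ) + 1) / 2)
      = √(1 / (2 * π * (k + 1 : ℕ))) * √m ^ (k + 2) := by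
        rw [rpow_div_two_eq_sqrt _ hm, ← rpow_natCast]; push_cast; ring_nf
    _ ≤ √(1 - l) * √l ^ (k + 1) * √m ^ (k + 2) := by gcongr
    _ = √l * √(1 - l) * m * (√l * √m) ^ (k + 1 - 1) := by
        rw [Nat.add_sub_cancel]
        linear_combination (√(1 - l) * √l ^ (k + 1) * √m ^ k) * sq_sqrt hm
end

section
/- Let n be a positive integer, let K ⊆ ℝⁿ be a centrally symmetric convex body (compact, convex, with nonempty interior, and K = −K), let d satisfy 0 ≤ d ≤ 2, and let v ∈ ℝⁿ be such that ‖v‖_K = d. Then vol(K ∩ (K + v)) / vol(K) ≥ (1 − d/2)ⁿ, where vol denotes n-dimensional Lebesgue measure. -/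
open MeasureTheory
open scoped Pointwise

theorem convex_body_intersection_volume_lower_bound
    (n : ℕ) (hn : 0 < n) (K : Set (EuclideanSpace ℝ (Fin n)))
    (hK_compact : IsCompact K) (hK_convex : Convex ℝ K)
    (hK_int : (interior K).Nonempty) (hK_symm : K = -K)
    (d : ℝ) (hd0 : 0 ≤ d) (hd2 : d ≤ 2)
    (v : EuclideanSpace ℝ (Fin n)) (hv : gauge K v = d) :
    (volume (K ∩ (v +ᵥ K))).toReal / (volume K).toReal ≥ (1 - d / 2) ^ n := by
  set t : ℝ := 1 - d / 2 with ht_def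
  have ht0 : 0 ≤ t := by simp [ht_def]; linarith
  -- 0 ∈ interior K
  obtain ⟨x₀, hx₀⟩ := hK_int
  have hx₀' : -x₀ ∈ interior K := by
    have : x₀ ∈ interior (-K) := hK_symm ▸ hx₀
    rw [show (-K : Set (EuclideanSpace ℝ (Fin n))) = (-1 : ℝ) • K by
      simp, interior_smul₀ (by norm_num : (-1:ℝ) ≠ 0)] at this
    obtain ⟨y, hy, hxy⟩ := this
    simpa [← hxy] using hy
  have h0int : (0 : EuclideanSpace ℝ (Fin n)) ∈ interior K := by
    have := (hK_convex.interior) hx₀ hx₀' (by norm_num : (0:ℝ) ≤ 1/2)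
      (by norm_num : (0:ℝ) ≤ 1/2) (by norm_num)
    simpa using this
  have h0K : (0 : EuclideanSpace ℝ (Fin n)) ∈ K := interior_subset h0int
  have hnhds : K ∈ nhds (0 : EuclideanSpace ℝ (Fin n)) :=
    mem_interior_iff_mem_nhds.mp h0int
  -- obtain u ∈ K with v = d • u
  obtain ⟨u, huK, huv⟩ : ∃ u ∈ K, v = d • u := by
    rcases eq_or_lt_of_le hd0 with h | hdpos
    · have hb : Bornology.IsVonNBounded ℝ K :=
        NormedSpace.isVonNBounded_of_isBounded _ hK_compact.isBounded
      have hv0 : v = 0 := by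
        rw [← gauge_eq_zero (absorbent_nhds_zero hnhds) hb, hv, ← h]
      exact ⟨0, h0K, by simp [hv0, ← h]⟩
    · refine ⟨d⁻¹ • v, ?_, by simp [smul_smul, mul_inv_cancel₀ hdpos.ne']⟩
      have hg : gauge K (d⁻¹ • v) ≤ 1 := by
        rw [gauge_smul_of_nonneg (inv_nonneg.2 hd0), smul_eq_mul, hv]
        simp [inv_mul_cancel₀ hdpos.ne']
      have := (gauge_le_one_iff_mem_closure hK_convex hnhds).mp hg
      rwa [hK_compact.isClosed.closure_eq] at this
  have hmuK : -u ∈ K := by rw [hK_symm]; simpa using huK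
  -- the translated scaled copy is inside the intersection
  have hsub : ((d/2) • u) +ᵥ (t • K) ⊆ K ∩ (v +ᵥ K) := by
    rintro y ⟨z, ⟨x, hxK, rfl⟩, rfl⟩
    constructor
    · exact hK_convex huK hxK (by linarith) ht0 (by ring)
    · refine ⟨(d/2) • (-u) + t • x, hK_convex hmuK hxK (by linarith) ht0 (by ring), ?_⟩
      simp only [huv, vadd_eq_add, smul_neg]
      module
  -- volume computation
  have hvolS : volume (((d/2) • u) +ᵥ (t • K)) = ENNReal.ofReal (t ^ n) * volume K := by
    rw [measure_vadd, Measure.addHaar_smul, finrank_euclideanSpace_fin,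
      abs_of_nonneg (pow_nonneg ht0 n)]
  have hKlt : volume K < ⊤ := hK_compact.measure_lt_top
  have hKpos : 0 < volume K := Measure.measure_pos_of_nonempty_interior _ ⟨x₀, hx₀⟩
  have hIle : volume (K ∩ (v +ᵥ K)) ≤ volume K := measure_mono Set.inter_subset_left
  have hIlt : volume (K ∩ (v +ᵥ K)) < ⊤ := lt_of_le_of_lt hIle hKlt
  have hge : ENNReal.ofReal (t ^ n) * volume K ≤ volume (K ∩ (v +ᵥ K)) := by
    rw [← hvolS]; exact measure_mono hsub
  have h1 : t ^ n * (volume K).toReal ≤ (volume (K ∩ (v +ᵥ K))).toReal := by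
    have := ENNReal.toReal_mono hIlt.ne hge
    rwa [ENNReal.toReal_mul, ENNReal.toReal_ofReal (pow_nonneg ht0 n)] at this
  have hKpos' : 0 < (volume K).toReal := ENNReal.toReal_pos hKpos.ne' hKlt.ne
  rw [ge_iff_le, le_div_iff₀ hKpos']
  exact h1
end

section
/- Let n be a positive integer, let K ⊆ ℝⁿ be a centrally symmetric convex body (compact, convex, with nonempty interior, and K = −K), let d satisfy 0 ≤ d ≤ 2, and let v ∈ ℝⁿ be such that ‖v‖_K = d. Then (1 − d/2)·K + v/2 ⊆ K ∩ (K + v). -/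
open scoped Pointwise

theorem convex_body_intersection_contains_shrunk_copy
    (n : ℕ) (hn : 0 < n) (K : Set (EuclideanSpace ℝ (Fin n)))
    (hK_compact : IsCompact K) (hK_convex : Convex ℝ K)
    (hK_int : (interior K).Nonempty) (hK_symm : K = -K)
    (d : ℝ) (hd0 : 0 ≤ d) (hd2 : d ≤ 2)
    (v : EuclideanSpace ℝ (Fin n)) (hv : gauge K v = d) :
    ((1 / 2 : ℝ) • v) +ᵥ ((1 - d / 2) • K) ⊆ K ∩ (v +ᵥ K) := by
  -- 0 is in the interior of K
  obtain ⟨x, hx⟩ := hK_int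
  have hxneg : -x ∈ interior K := by
    rw [hK_symm]
    have : -K = (-1 : ℝ) • K := by simp
    rw [this, interior_smul₀ (by norm_num : (-1:ℝ) ≠ 0)]
    exact ⟨x, hx, by simp⟩
  have h0 : (0 : EuclideanSpace ℝ (Fin n)) ∈ interior K := by
    have := hK_convex.interior hx hxneg (by norm_num : (0:ℝ) ≤ 1/2)
      (by norm_num : (0:ℝ) ≤ 1/2) (by norm_num)
    simpa using this
  have hnhds : K ∈ nhds (0 : EuclideanSpace ℝ (Fin n)) :=
    mem_interior_iff_mem_nhds.mp h0
  have h0K : (0 : EuclideanSpace ℝ (Fin n)) ∈ K := interior_subset h0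
  -- v = d • w for some w ∈ K
  obtain ⟨w, hwK, hvw⟩ : ∃ w ∈ K, v = d • w := by
    rcases eq_or_lt_of_le hd0 with hd | hd
    · have hb : Bornology.IsVonNBounded ℝ K := NormedSpace.isVonNBounded_of_isBounded ℝ hK_compact.isBounded
      have hv0 : v = 0 := by
        have := (gauge_eq_zero (absorbent_nhds_zero hnhds) hb).mp (hv.trans hd.symm)
        exact this
      exact ⟨0, h0K, by simp [hv0]⟩
    · refine ⟨d⁻¹ • v, ?_, by rw [smul_smul, mul_inv_cancel₀ hd.ne', one_smul]⟩
      have hg : gauge K (d⁻¹ • v) ≤ 1 := by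
        rw [gauge_smul_of_nonneg (inv_nonneg.mpr hd0), hv, smul_eq_mul,
          inv_mul_cancel₀ hd.ne']
      have := (gauge_le_one_iff_mem_closure hK_convex hnhds).mp hg
      rwa [hK_compact.isClosed.closure_eq] at this
  -- main inclusion
  rintro y ⟨_, ⟨z, hzK, rfl⟩, rfl⟩
  simp only [Set.mem_inter_iff]
  constructor
  · have : (1 - d/2) • z + (d/2) • w ∈ K :=
      hK_convex hzK hwK (by linarith) (by linarith) (by ring)
    convert this using 1
    simp only [vadd_eq_add, hvw]
    module
  · refine ⟨(1 - d/2) • z + (d/2) • (-w), hK_convex hzK (by rw [hK_symm]; exact Set.neg_mem_neg.mpr hwK) (by linarith) (by linarith) (by ring), ?_⟩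
    simp only [vadd_eq_add, hvw]
    module
end

section
/- For every positive integer n, Γ(n/2 + 1) / (√π · Γ(n/2 + 1/2)) ≥ √(n/(2π)), where Γ denotes the Gamma function. Equivalently, the ratio of the volume of the (n−1)-dimensional unit Euclidean ball to that of the n-dimensional unit Euclidean ball is at least √(n/(2π)). -/
open Real

lemma gamma_half_le (x : ℝ) (hx : 0 < x) :
    Real.Gamma (x + 1/2) ≤ Real.Gamma (x + 1) / Real.sqrt x := by
  have hx1 : (0:ℝ) < x + 1 := by linarith
  have hG : Real.Gamma (x + 1) = x * Real.Gamma x := Real.Gamma_add_one (ne_of_gt hx)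
  have hGx : 0 < Real.Gamma x := Real.Gamma_pos_of_pos hx
  have hGx1 : 0 < Real.Gamma (x + 1) := Real.Gamma_pos_of_pos hx1
  have hc := Real.convexOn_log_Gamma.2 (Set.mem_Ioi.2 hx) (Set.mem_Ioi.2 hx1)
      (by norm_num : (0:ℝ) ≤ 1/2) (by norm_num : (0:ℝ) ≤ 1/2) (by norm_num)
  simp only [Function.comp_apply, smul_eq_mul] at hc
  have hpt : (1/2 : ℝ) * x + (1/2 : ℝ) * (x + 1) = x + 1/2 := by ring
  rw [hpt] at hc
  -- hc : log Γ(x+1/2) ≤ 1/2 * log Γ x + 1/2 * log Γ (x+1)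
  have key : Real.log (Real.Gamma (x + 1/2)) ≤ Real.log (Real.Gamma (x+1) / Real.sqrt x) := by
    rw [Real.log_div (ne_of_gt hGx1) (ne_of_gt (Real.sqrt_pos.2 hx)), Real.log_sqrt hx.le]
    rw [hG, Real.log_mul (ne_of_gt hx) (ne_of_gt hGx)] at hc ⊢
    linarith [hc]
  have hGh : 0 < Real.Gamma (x + 1/2) := Real.Gamma_pos_of_pos (by linarith)
  exact (Real.log_le_log_iff hGh (div_pos hGx1 (Real.sqrt_pos.2 hx))).1 key

theorem gamma_ratio_ge_sqrt (n : ℕ) (hn : 0 < n) :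
    Real.Gamma ((n : ℝ) / 2 + 1) / (Real.sqrt Real.pi * Real.Gamma ((n : ℝ) / 2 + 1 / 2)) ≥
      Real.sqrt ((n : ℝ) / (2 * Real.pi)) := by
  set x : ℝ := (n : ℝ) / 2 with hxdef
  have hx : 0 < x := by positivity
  have h := gamma_half_le x hx
  have hGh : 0 < Real.Gamma (x + 1/2) := Real.Gamma_pos_of_pos (by linarith)
  have hsx : 0 < Real.sqrt x := Real.sqrt_pos.2 hx
  have hsp : 0 < Real.sqrt Real.pi := Real.sqrt_pos.2 Real.pi_pos
  have h2 : Real.sqrt x * Real.Gamma (x + 1/2) ≤ Real.Gamma (x + 1) := by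
    rw [le_div_iff₀ hsx] at h; linarith [h]
  have hrhs : Real.sqrt ((n : ℝ) / (2 * Real.pi)) = Real.sqrt x / Real.sqrt Real.pi := by
    have : (n : ℝ) / (2 * Real.pi) = x / Real.pi := by
      rw [hxdef]; field_simp
    rw [this, Real.sqrt_div hx.le]
  rw [ge_iff_le, hrhs, div_le_div_iff₀ hsp (by positivity)]
  calc Real.sqrt x * (Real.sqrt Real.pi * Real.Gamma (x + 1/2))
      = Real.sqrt Real.pi * (Real.sqrt x * Real.Gamma (x + 1/2)) := by ring
    _ ≤ Real.sqrt Real.pi * Real.Gamma (x + 1) := by nlinarith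
    _ = Real.Gamma (x + 1) * Real.sqrt Real.pi := by ring
end

section
/- Let L ⊂ ℝⁿ be a lattice, let s > 0, and let r ≥ s·√(n/(2π)). Then ∑_{y ∈ L, ‖y‖ ≥ r} ρ_s(y) ≤ exp(−π·x²) · ρ_s(L), where x := r/s − √(n/(2π)). Equivalently, for Y drawn from the discrete Gaussian distribution D_{L,s}, the probability that ‖Y‖ ≥ r is at most exp(−π·x²). -/
/-!
For `s ≤ σ` the function `s⁻ⁿ ρ_s − σ⁻ⁿ ρ_σ` is the Fourier transform of the nonnegative function
`exp (-π s² ‖ξ‖²) − exp (-π σ² ‖ξ‖²)`, hence its double sums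
`∑_{a, b ∈ A} (s⁻ⁿ ρ_s − σ⁻ⁿ ρ_σ)(a − b)` over finite sets are nonnegative. Averaging them over
the cubes `{0, …, T}ⁿ` of integer coordinates and letting `T → ∞` shows that its sum over the
lattice is nonnegative: `σ ↦ σ⁻ⁿ ρ_σ(L)` is antitone. On the tail `‖y‖ ≥ r` we have
`ρ_s(y) ≤ exp (-π r² (s⁻² − σ⁻²)) ρ_σ(y)`, so the tail mass is at most
`exp (-π r² (s⁻² − σ⁻²)) (σ / s)ⁿ ρ_s(L)`. Choosing `σ = r / √(n / 2π)` and bounding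
`tⁿ ≤ exp (n (t − 1))` turns this into `exp (-π (r / s − √(n / 2π))²) ρ_s(L)`.
-/

open Real Finset Filter Topology MeasureTheory FourierTransform Module
open scoped RealInnerProductSpace

noncomputable section

def rho {V : Type*} [Norm V] (s : ℝ) (x : V) : ℝ := rexp (-π * ‖x‖ ^ 2 / s ^ 2)

lemma rho_pos {V : Type*} [Norm V] (s : ℝ) (x : V) : 0 < rho s x := exp_pos _

lemma rho_le_exp_mul_rho {V : Type*} [Norm V] {s σ r : ℝ} (hs : 0 < s) (hsσ : s ≤ σ)
    (hr : 0 ≤ r) {y : V} (hy : r ≤ ‖y‖) :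
    rho s y ≤ rexp (-π * r ^ 2 * (1 / s ^ 2 - 1 / σ ^ 2)) * rho σ y := by
  rw [rho, rho, ← exp_add, exp_le_exp]
  have hσs : 1 / σ ^ 2 ≤ 1 / s ^ 2 := one_div_le_one_div_of_le (by positivity) (by gcongr)
  have hry : r ^ 2 ≤ ‖y‖ ^ 2 := by gcongr
  have := mul_le_mul_of_nonneg_left hry (mul_nonneg pi_pos.le (sub_nonneg.2 hσs))
  have hsplit : -π * ‖y‖ ^ 2 / s ^ 2 =
      -π * ‖y‖ ^ 2 * (1 / s ^ 2 - 1 / σ ^ 2) + -π * ‖y‖ ^ 2 / σ ^ 2 := by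
    ring
  linarith

lemma pow_le_exp_mul_sub_one {x : ℝ} (hx : 0 ≤ x) (d : ℕ) : x ^ d ≤ rexp (d * (x - 1)) := by
  rw [exp_nat_mul]
  gcongr
  linarith [add_one_le_exp (x - 1)]

lemma exp_neg_pi_mul_div_pow_le {a u : ℝ} (ha : 0 < a) (hu : 0 ≤ u) {d : ℕ}
    (hd : (d : ℝ) = 2 * π * a ^ 2) :
    rexp (-π * (u ^ 2 - a ^ 2)) * (u / a) ^ d ≤ rexp (-π * (u - a) ^ 2) :=
  calc _ ≤ rexp (-π * (u ^ 2 - a ^ 2)) * rexp (d * (u / a - 1)) := by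
        gcongr; exact pow_le_exp_mul_sub_one (by positivity) d
    _ = rexp (-π * (u - a) ^ 2) := by
        rw [← exp_add, hd]
        congr 1
        field_simp
        ring

lemma summable_exp_neg_mul_int_sq {c : ℝ} (hc : 0 < c) :
    Summable fun k : ℤ => rexp (-c * k ^ 2) := by
  have hτ : 0 < (Complex.I * (c / π : ℝ)).im := by
    simp only [Complex.mul_im, Complex.I_re, Complex.I_im, Complex.ofReal_re, Complex.ofReal_im]
    positivity
  refine ((summable_jacobiTheta₂_term_iff 0 _).2 hτ).norm.congr fun k => ?_
  rw [norm_jacobiTheta₂_term]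
  simp only [Complex.mul_im, Complex.I_re, Complex.I_im, Complex.ofReal_re, Complex.ofReal_im,
    Complex.zero_im, mul_zero, sub_zero]
  field_simp
  ring_nf

lemma summable_pi_prod_of_nonneg {ι α : Type*} [Fintype ι] {f : ι → α → ℝ} (hf : ∀ i, 0 ≤ f i)
    (hs : ∀ i, Summable (f i)) : Summable fun x : ι → α => ∏ i, f i (x i) := by
  classical
  refine summable_of_sum_le (c := ∏ i, ∑' a, f i a) (fun x => prod_nonneg fun i _ => hf i _)
    fun s => ?_
  calc ∑ x ∈ s, ∏ i, f i (x i)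
      ≤ ∑ x ∈ Fintype.piFinset fun i => s.image (· i), ∏ i, f i (x i) :=
        sum_le_sum_of_subset_of_nonneg
          (fun x hx => Fintype.mem_piFinset.2 fun i => mem_image_of_mem _ hx)
          fun x _ _ => prod_nonneg fun i _ => hf i _
    _ = ∏ i, ∑ a ∈ s.image (· i), f i a := (prod_univ_sum _ _).symm
    _ ≤ ∏ i, ∑' a, f i a :=
        prod_le_prod (fun i _ => sum_nonneg fun a _ => hf i a)
          fun i _ => (hs i).sum_le_tsum _ fun a _ => hf i a

theorem summable_rho_sum_smul {V ι : Type*} [NormedAddCommGroup V] [InnerProductSpace ℝ V]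
    [Fintype ι] {b : ι → V} (hb : LinearIndependent ℝ b) {σ : ℝ} (hσ : 0 < σ) :
    Summable fun z : ι → ℤ => rho σ (∑ i, (z i : ℝ) • b i) := by
  let B : EuclideanSpace ℝ ι →ₗ[ℝ] V :=
    Fintype.linearCombination ℝ b ∘ₗ (WithLp.linearEquiv 2 ℝ (ι → ℝ)).toLinearMap
  obtain ⟨K, hK, hKB⟩ := B.injective_iff_antilipschitz.1
    (hb.fintypeLinearCombination_injective.comp (WithLp.linearEquiv 2 ℝ (ι → ℝ)).injective)
  set c := π / ((K : ℝ) ^ 2 * σ ^ 2)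
  have hc : 0 < c := by positivity
  have hcK : ∀ x, c * (K ^ 2 * x) = π * x / σ ^ 2 := fun x => by simp only [c]; field_simp
  clear_value c
  refine (summable_pi_prod_of_nonneg (fun _ _ => (exp_pos _).le)
    fun _ => summable_exp_neg_mul_int_sq hc).of_nonneg_of_le (fun _ => (rho_pos _ _).le)
    fun z => ?_
  set v : EuclideanSpace ℝ ι := WithLp.toLp 2 fun i => (z i : ℝ)
  have hBv : B v = ∑ i, (z i : ℝ) • b i := by simp [B, v, Fintype.linearCombination_apply]
  have hv : ‖v‖ ^ 2 ≤ K ^ 2 * ‖B v‖ ^ 2 := by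
    rw [← mul_pow]
    gcongr
    simpa using hKB.le_mul_dist v 0
  have hnorm : ∑ i, (z i : ℝ) ^ 2 = ‖v‖ ^ 2 := by simp [v, EuclideanSpace.norm_sq_eq]
  rw [rho, ← exp_sum, exp_le_exp, ← hBv, ← Finset.mul_sum, hnorm, neg_mul, neg_mul, neg_div,
    neg_le_neg_iff, ← hcK]
  exact mul_le_mul_of_nonneg_left hv hc.le

def intCube (ι : Type*) [Fintype ι] [DecidableEq ι] (T : ℕ) : Finset (ι → ℤ) :=
  Fintype.piFinset fun _ => Icc 0 (T : ℤ)

section IntCube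

variable {ι : Type*} [Fintype ι]

lemma tendsto_prod_toNat_div_pow (d : ι → ℤ) :
    Tendsto (fun T : ℕ =>
      (∏ i, (((T : ℤ) + 1 - |d i|).toNat : ℝ)) / ((T : ℝ) + 1) ^ Fintype.card ι) atTop (𝓝 1) := by
  simp_rw [← Finset.card_univ, ← prod_const, ← prod_div_distrib]
  rw [show (𝓝 (1 : ℝ)) = 𝓝 (∏ _i : ι, (1 : ℝ)) by simp]
  refine tendsto_finsetProd _ fun i _ => ?_
  have h : Tendsto (fun T : ℕ => 1 - |d i| * (1 / ((T : ℝ) + 1))) atTop (𝓝 1) := by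
    simpa using (tendsto_one_div_add_atTop_nhds_zero_nat.const_mul (|d i| : ℝ)).const_sub 1
  refine h.congr' ?_
  filter_upwards [eventually_ge_atTop (d i).natAbs] with T hT
  have hT' : |d i| ≤ (T : ℤ) + 1 := by rw [Int.abs_eq_natAbs]; omega
  rw [show (((T : ℤ) + 1 - |d i|).toNat : ℝ) = (((T : ℤ) + 1 - |d i|).toNat : ℤ) by norm_cast,
    Int.toNat_of_nonneg (by omega)]
  push_cast
  field_simp

variable [DecidableEq ι]

lemma card_intCube_filter_sub_eq (T : ℕ) (d : ι → ℤ) :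
    #{q ∈ intCube ι T ×ˢ intCube ι T | q.1 - q.2 = d} = ∏ i, ((T : ℤ) + 1 - |d i|).toNat :=
  calc _ = #(Fintype.piFinset fun i => Icc (max 0 (d i)) (min T (T + d i))) := by
        refine card_nbij' Prod.fst (fun a => (a, a - d)) ?_ ?_ ?_ ?_ <;> intro q hq <;>
          simp only [intCube, mem_coe, mem_filter, mem_product, Fintype.mem_piFinset, mem_Icc,
            funext_iff, Pi.sub_apply] at hq ⊢
        · intro i
          have := hq.1.1 i; have := hq.1.2 i; have := hq.2 i; omega
        · refine ⟨⟨fun i => ?_, fun i => ?_⟩, fun i => ?_⟩ <;> have := hq i <;> omega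
        · exact Prod.ext rfl (funext fun i => by have := hq.2 i; simp only [Pi.sub_apply]; omega)
    _ = ∏ i, ((T : ℤ) + 1 - |d i|).toNat := by
        rw [Fintype.card_piFinset]
        refine prod_congr rfl fun i _ => ?_
        rw [Int.card_Icc]
        congr 1
        rcases abs_cases (d i) with h | h <;> omega

lemma sum_intCube_sum_intCube_sub_eq_tsum (φ : (ι → ℤ) → ℝ) (T : ℕ) :
    ∑ a ∈ intCube ι T, ∑ b ∈ intCube ι T, φ (a - b) =
      ∑' d, (∏ i, (((T : ℤ) + 1 - |d i|).toNat : ℝ)) * φ d := by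
  rw [← sum_product' (f := fun a b => φ (a - b)), sum_comp,
    tsum_eq_sum (s := (intCube ι T ×ˢ intCube ι T).image _)]
  · refine sum_congr rfl fun d _ => ?_
    rw [card_intCube_filter_sub_eq, nsmul_eq_mul, Nat.cast_prod]
  · intro d hd
    rw [← Nat.cast_prod, ← card_intCube_filter_sub_eq, card_eq_zero.2, Nat.cast_zero, zero_mul]
    exact filter_eq_empty_iff.2 fun q hq hqd => hd (mem_image.2 ⟨q, hq, hqd⟩)

end IntCube

theorem tsum_nonneg_of_sum_sum_sub_nonneg {ι : Type*} [Fintype ι] {φ : (ι → ℤ) → ℝ}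
    (hφ : Summable φ) (h : ∀ A : Finset (ι → ℤ), 0 ≤ ∑ a ∈ A, ∑ b ∈ A, φ (a - b)) :
    0 ≤ ∑' d, φ d := by
  classical
  set w : ℕ → (ι → ℤ) → ℝ := fun T d =>
    (∏ i, (((T : ℤ) + 1 - |d i|).toNat : ℝ)) / ((T : ℝ) + 1) ^ Fintype.card ι
  have hw : ∀ T d, 0 ≤ w T d ∧ w T d ≤ 1 := by
    intro T d
    refine ⟨by positivity, div_le_one_of_le₀ ?_ (by positivity)⟩
    rw [← Finset.card_univ, ← prod_const]
    refine prod_le_prod (fun _ _ => by positivity) fun i _ => ?_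
    have : ((T : ℤ) + 1 - |d i|).toNat ≤ T + 1 := by have := abs_nonneg (d i); omega
    exact_mod_cast this
  -- `w T d` is the fraction of `intCube ι T` that overlaps its translate by `d`.
  have hlim : Tendsto (fun T => ∑' d, w T d * φ d) atTop (𝓝 (∑' d, φ d)) := by
    refine tendsto_tsum_of_dominated_convergence hφ.abs
      (fun d => by simpa using (tendsto_prod_toNat_div_pow d).mul_const (φ d))
      (.of_forall fun T d => ?_)
    rw [norm_mul, Real.norm_of_nonneg (hw T d).1, Real.norm_eq_abs]
    exact mul_le_of_le_one_left (abs_nonneg _) (hw T d).2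
  refine ge_of_tendsto' hlim fun T => ?_
  simp_rw [w, div_mul_eq_mul_div]
  rw [tsum_div_const, ← sum_intCube_sum_intCube_sub_eq_tsum]
  exact div_nonneg (h _) (by positivity)

section LatticeGaussian

variable {V : Type*} [NormedAddCommGroup V] [InnerProductSpace ℝ V] [FiniteDimensional ℝ V]
  [MeasurableSpace V] [BorelSpace V]

lemma fourier_gaussian_eq_inv_pow_mul_rho {σ : ℝ} (hσ : 0 < σ) (y : V) :
    𝓕 (fun v : V => (rexp (-(π * σ ^ 2) * ‖v‖ ^ 2) : ℂ)) y =
      ((σ ^ finrank ℝ V)⁻¹ * rho σ y : ℝ) := by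
  have hb : 0 < ((π * σ ^ 2 : ℝ) : ℂ).re := by simp only [Complex.ofReal_re]; positivity
  have h := fourier_gaussian_innerProductSpace hb y
  simp only [Complex.ofReal_exp]
  push_cast at h ⊢
  rw [h]
  have hπ : (π : ℂ) ≠ 0 := Complex.ofReal_ne_zero.2 pi_ne_zero
  have hσ' : (σ : ℂ) ≠ 0 := Complex.ofReal_ne_zero.2 hσ.ne'
  have hscale : ((π : ℂ) / (π * (σ : ℂ) ^ 2)) ^ ((finrank ℝ V : ℂ) / 2) =
      ((σ : ℂ) ^ finrank ℝ V)⁻¹ := by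
    have hpow : (σ⁻¹ ^ 2) ^ ((finrank ℝ V : ℝ) / 2) = σ⁻¹ ^ finrank ℝ V := by
      rw [← Real.rpow_natCast σ⁻¹ 2, ← Real.rpow_mul (by positivity)]
      norm_num [mul_div_cancel₀]
    have := congrArg ((↑) : ℝ → ℂ) hpow
    rw [Complex.ofReal_cpow (by positivity)] at this
    push_cast at this
    rw [show (π : ℂ) / (π * (σ : ℂ) ^ 2) = (σ : ℂ)⁻¹ ^ 2 by field_simp, this, inv_pow]
  rw [hscale, rho, Complex.ofReal_exp]
  push_cast
  congr 2
  field_simp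

theorem sum_sum_nonneg_of_ofReal_eq_fourier {k g : V → ℝ}
    (hk : ∀ y, (k y : ℂ) = 𝓕 (fun v => (g v : ℂ)) y) (hg : 0 ≤ g) (hgi : Integrable g)
    {ι : Type*} (A : Finset ι) (p : ι → V) :
    0 ≤ ∑ i ∈ A, ∑ j ∈ A, k (p i - p j) := by
  set S : V → ℂ := fun v => ∑ i ∈ A, (𝐞 (-⟪v, p i⟫) : ℂ)
  have hterm : ∀ v i j,
      (𝐞 (-⟪v, p i - p j⟫) : ℂ) = 𝐞 (-⟪v, p i⟫) * starRingEnd ℂ (𝐞 (-⟪v, p j⟫)) := by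
    intro v i j
    rw [← Circle.coe_inv_eq_conj, ← Circle.coe_mul, ← AddChar.map_neg_eq_inv,
      ← AddChar.map_add_eq_mul, inner_sub_right]
    ring_nf
  have hint : ∀ y, Integrable fun v => 𝐞 (-⟪v, y⟫) • (g v : ℂ) := fun y =>
    (Real.fourierIntegral_convergent_iff y).2 hgi.ofReal
  have key : ((∑ i ∈ A, ∑ j ∈ A, k (p i - p j) : ℝ) : ℂ) =
      ((∫ v, g v * Complex.normSq (S v) : ℝ) : ℂ) := by
    push_cast
    simp_rw [hk, Real.fourier_eq]
    rw [← integral_complex_ofReal]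
    simp_rw [← integral_finsetSum _ fun _ _ => hint _]
    rw [← integral_finsetSum _ fun i _ => integrable_finsetSum _ fun j _ => hint _]
    refine integral_congr_ae (.of_forall fun v => ?_)
    simp_rw [Circle.smul_def, hterm, smul_eq_mul]
    push_cast
    rw [← Complex.mul_conj, map_sum, sum_mul_sum]
    simp only [mul_sum]
    exact sum_congr rfl fun _ _ => sum_congr rfl fun _ _ => mul_comm _ _
  rw [Complex.ofReal_inj.1 key]
  exact integral_nonneg fun v => mul_nonneg (hg v) (Complex.normSq_nonneg _)

lemma sum_sum_inv_pow_mul_rho_sub_nonneg {σ₁ σ₂ : ℝ} (h₁ : 0 < σ₁) (h₁₂ : σ₁ ≤ σ₂) {ι : Type*}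
    (A : Finset ι) (p : ι → V) :
    0 ≤ ∑ i ∈ A, ∑ j ∈ A, ((σ₁ ^ finrank ℝ V)⁻¹ * rho σ₁ (p i - p j) -
      (σ₂ ^ finrank ℝ V)⁻¹ * rho σ₂ (p i - p j)) := by
  have h₂ := h₁.trans_le h₁₂
  set G : ℝ → V → ℝ := fun σ v => rexp (-(π * σ ^ 2) * ‖v‖ ^ 2)
  have hG : ∀ σ > 0, Integrable (G σ) := fun σ hσ => by
    have hb : 0 < ((π * σ ^ 2 : ℝ) : ℂ).re := by simp only [Complex.ofReal_re]; positivity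
    refine (GaussianFourier.integrable_cexp_neg_mul_sq_norm_add hb 0 (0 : V)).norm.congr
      (.of_forall fun v => ?_)
    simp only [zero_mul, add_zero, G]
    norm_cast
    exact Real.norm_of_nonneg (exp_pos _).le
  refine sum_sum_nonneg_of_ofReal_eq_fourier
    (k := fun y => (σ₁ ^ finrank ℝ V)⁻¹ * rho σ₁ y - (σ₂ ^ finrank ℝ V)⁻¹ * rho σ₂ y)
    (g := fun v => G σ₁ v - G σ₂ v) (fun y => ?_) (fun v => sub_nonneg.2 (exp_le_exp.2 ?_))
    ((hG σ₁ h₁).sub (hG σ₂ h₂)) A p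
  · simp only [Complex.ofReal_sub]
    rw [← fourier_gaussian_eq_inv_pow_mul_rho h₁, ← fourier_gaussian_eq_inv_pow_mul_rho h₂]
    simp only [Real.fourier_eq, smul_sub]
    exact (integral_sub ((Real.fourierIntegral_convergent_iff y).2 (hG σ₁ h₁).ofReal)
      ((Real.fourierIntegral_convergent_iff y).2 (hG σ₂ h₂).ofReal)).symm
  · rw [neg_mul, neg_mul, neg_le_neg_iff]
    gcongr

theorem antitoneOn_inv_pow_mul_tsum_rho {ι : Type*} [Fintype ι] (f : (ι → ℤ) →+ V)
    (hf : ∀ σ > 0, Summable fun z => rho σ (f z)) :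
    AntitoneOn (fun σ => (σ ^ finrank ℝ V)⁻¹ * ∑' z, rho σ (f z)) (Set.Ioi 0) := by
  intro σ₁ h₁ σ₂ h₂ h₁₂
  have h₁' := (hf σ₁ h₁).mul_left (σ₁ ^ finrank ℝ V)⁻¹
  have h₂' := (hf σ₂ h₂).mul_left (σ₂ ^ finrank ℝ V)⁻¹
  have := tsum_nonneg_of_sum_sum_sub_nonneg (h₁'.sub h₂') fun A => by
    simpa only [map_sub] using sum_sum_inv_pow_mul_rho_sub_nonneg h₁ h₁₂ A f
  rwa [h₁'.tsum_sub h₂', tsum_mul_left, tsum_mul_left, sub_nonneg] at this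

theorem tsum_rho_tail_le {ι : Type*} [Fintype ι] (f : (ι → ℤ) →+ V)
    (hf : ∀ σ > 0, Summable fun z => rho σ (f z)) (hV : 0 < finrank ℝ V) {s r : ℝ} (hs : 0 < s)
    (hr : s * √(finrank ℝ V / (2 * π)) ≤ r) :
    ∑' z : {z // r ≤ ‖f z‖}, rho s (f z) ≤
      rexp (-π * (r / s - √(finrank ℝ V / (2 * π))) ^ 2) * ∑' z, rho s (f z) := by
  set d := finrank ℝ V
  set a := √(d / (2 * π))
  have ha : 0 < a := sqrt_pos.2 (by positivity)
  have hd : (d : ℝ) = 2 * π * a ^ 2 := by rw [sq_sqrt (by positivity)]; field_simp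
  set u := r / s
  have hau : a ≤ u := by rwa [le_div_iff₀ hs, mul_comm]
  have hu : 0 < u := ha.trans_le hau
  have hr₀ : 0 < r := (div_pos_iff_of_pos_right hs).1 hu
  -- `σ = r / a` minimises `exp (-π r² (s⁻² − σ⁻²)) (σ / s)ᵈ`.
  set σ := s * (u / a)
  have hsσ : s ≤ σ := le_mul_of_one_le_right hs.le ((one_le_div ha).2 hau)
  have hσ : 0 < σ := hs.trans_le hsσ
  have hexp : r ^ 2 * (1 / s ^ 2 - 1 / σ ^ 2) = u ^ 2 - a ^ 2 := by
    simp only [σ, u]; field_simp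
  have hmono : ∑' z, rho σ (f z) ≤ (u / a) ^ d * ∑' z, rho s (f z) := by
    have := antitoneOn_inv_pow_mul_tsum_rho f hf hs hσ hsσ
    rw [inv_mul_le_iff₀ (by positivity), ← mul_assoc, ← div_eq_mul_inv, ← div_pow] at this
    rwa [show σ / s = u / a by simp only [σ]; field_simp] at this
  calc ∑' z : {z // r ≤ ‖f z‖}, rho s (f z)
      ≤ ∑' z, rexp (-π * (u ^ 2 - a ^ 2)) * rho σ (f z) := by
        refine (hf s hs).subtype _ |>.tsum_le_tsum_of_inj Subtype.val Subtype.val_injective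
          (fun _ _ => (mul_pos (exp_pos _) (rho_pos _ _)).le) (fun z => ?_) ((hf σ hσ).mul_left _)
        rw [← hexp, ← mul_assoc]
        exact rho_le_exp_mul_rho hs hsσ hr₀.le z.2
    _ = rexp (-π * (u ^ 2 - a ^ 2)) * ∑' z, rho σ (f z) := tsum_mul_left
    _ ≤ rexp (-π * (u ^ 2 - a ^ 2)) * (u / a) ^ d * ∑' z, rho s (f z) := by
        rw [mul_assoc]; gcongr
    _ ≤ rexp (-π * (u - a) ^ 2) * ∑' z, rho s (f z) := by
        gcongr
        · exact tsum_nonneg fun _ => (rho_pos _ _).le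
        · exact exp_neg_pi_mul_div_pow_le ha hu.le hd

end LatticeGaussian

end

theorem discrete_gaussian_tail_bound
    (n : ℕ) (hn : 0 < n) (b : Fin n → EuclideanSpace ℝ (Fin n))
    (hb : LinearIndependent ℝ b)
    (L : Set (EuclideanSpace ℝ (Fin n)))
    (hL : L = {y | ∃ z : Fin n → ℤ, y = ∑ i, (z i : ℝ) • b i})
    (s r : ℝ) (hs : 0 < s) (hr : s * Real.sqrt (n / (2 * Real.pi)) ≤ r) :
    (∑' y : {y : EuclideanSpace ℝ (Fin n) | y ∈ L ∧ r ≤ ‖y‖},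
        Real.exp (-Real.pi * ‖(y : EuclideanSpace ℝ (Fin n))‖ ^ 2 / s ^ 2)) ≤
      Real.exp (-Real.pi * (r / s - Real.sqrt (n / (2 * Real.pi))) ^ 2) *
        ∑' y : L, Real.exp (-Real.pi * ‖(y : EuclideanSpace ℝ (Fin n))‖ ^ 2 / s ^ 2) := by
  let f : (Fin n → ℤ) →+ EuclideanSpace ℝ (Fin n) :=
    (Fintype.linearCombination ℝ b).toAddMonoidHom.comp (AddMonoidHom.compLeft (Int.castAddHom ℝ) _)
  have hf : Function.Injective f :=
    hb.fintypeLinearCombination_injective.comp Int.cast_injective.comp_left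
  have hrange : Set.range f = L := by
    rw [hL]; ext; simp [f, Fintype.linearCombination_apply, eq_comm]
  let e : (Fin n → ℤ) ≃ L := (Equiv.ofInjective f hf).trans (Equiv.setCongr hrange)
  let eTail : {z // r ≤ ‖f z‖} ≃ {y | y ∈ L ∧ r ≤ ‖y‖} :=
    (e.subtypeEquiv fun _ => Iff.rfl).trans
      (Equiv.subtypeSubtypeEquivSubtypeInter (· ∈ L) (r ≤ ‖·‖))
  have key := tsum_rho_tail_le (r := r) f (fun σ hσ => summable_rho_sum_smul hb hσ)
    (by rwa [finrank_euclideanSpace_fin]) hs (by rwa [finrank_euclideanSpace_fin])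
  rw [finrank_euclideanSpace_fin] at key
  rw [← e.tsum_eq, ← eTail.tsum_eq]
  exact key
end

section
/- Let b₁,…,bₙ ∈ ℝⁿ be linearly independent vectors generating the lattice L = {z₁b₁ + ⋯ + zₙbₙ : zᵢ ∈ ℤ}, and for each index i let Lᵢ be the sublattice generated by b₁,…,b_{i−1}, 2bᵢ, b_{i+1},…,bₙ. Then there exists an index i such that dist(bᵢ, Lᵢ) ≤ λ₁(L). -/
theorem gmss_yes_instance_direction
    (n : ℕ) (b : Fin n → EuclideanSpace ℝ (Fin n)) (hb : LinearIndependent ℝ b)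
    (L : Set (EuclideanSpace ℝ (Fin n)))
    (hL : L = {y | ∃ z : Fin n → ℤ, y = ∑ j, (z j : ℝ) • b j})
    (lam : ℝ) (hlam : IsLeast {x : ℝ | ∃ y ∈ L, y ≠ 0 ∧ ‖y‖ = x} lam) :
    ∃ i : Fin n,
      Metric.infDist (b i)
        {y | ∃ z : Fin n → ℤ,
          y = ∑ j, (z j : ℝ) • Function.update b i ((2 : ℝ) • b i) j} ≤ lam := by
  obtain ⟨⟨v, hvL, hv0, hnorm⟩, hlb⟩ := hlam
  rw [hL] at hvL
  obtain ⟨z, hz⟩ := hvL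
  have hlampos : 0 < lam := by
    rw [← hnorm]; exact norm_pos_iff.mpr hv0
  -- some coefficient is odd
  have hodd : ∃ i, Odd (z i) := by
    by_contra h
    push_neg at h
    have heven : ∀ j, ∃ w : ℤ, z j = w + w := fun j => Int.not_odd_iff_even.mp (h j)
    choose w hw using heven
    set u : EuclideanSpace ℝ (Fin n) := ∑ j, (w j : ℝ) • b j with hu
    have hvu : v = (2 : ℝ) • u := by
      rw [hz, hu, Finset.smul_sum]
      refine Finset.sum_congr rfl fun j _ => ?_
      rw [hw j, smul_smul]
      congr 1
      push_cast
      ring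
    have hu0 : u ≠ 0 := by
      intro h0
      apply hv0
      rw [hvu, h0, smul_zero]
    have hle : lam ≤ ‖u‖ := hlb ⟨u, by rw [hL]; exact ⟨w, rfl⟩, hu0, rfl⟩
    have : ‖v‖ = 2 * ‖u‖ := by
      rw [hvu, norm_smul]
      simp
    nlinarith [hnorm]
  obtain ⟨i, k, hk⟩ := hodd
  refine ⟨i, ?_⟩
  set z' : Fin n → ℤ := Function.update (fun j => -z j) i (-k) with hz'
  set p : EuclideanSpace ℝ (Fin n) :=
    ∑ j, (z' j : ℝ) • Function.update b i ((2 : ℝ) • b i) j with hp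
  have hpmem : p ∈ {y | ∃ z : Fin n → ℤ,
      y = ∑ j, (z j : ℝ) • Function.update b i ((2 : ℝ) • b i) j} := ⟨z', rfl⟩
  have h2 : b i - v = ∑ j, ((if j = i then (1 : ℝ) else 0) - (z j : ℝ)) • b j := by
    have : ∀ j, ((if j = i then (1 : ℝ) else 0) - (z j : ℝ)) • b j
        = (if j = i then b j else 0) - (z j : ℝ) • b j := by
      intro j
      by_cases hj : j = i <;> simp [hj, sub_smul]
    rw [hz]
    simp only [this, Finset.sum_sub_distrib, Finset.sum_ite_eq' Finset.univ i b,
      Finset.mem_univ, if_pos]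
  have hpv : p = b i - v := by
    rw [hp, h2]
    refine Finset.sum_congr rfl fun j _ => ?_
    by_cases hj : j = i
    · subst hj
      simp only [hz', Function.update_self, if_pos rfl]
      rw [hk, smul_smul]
      push_cast
      ring_nf
    · simp [hz', hj, Function.update_of_ne]
  calc Metric.infDist (b i) _ ≤ dist (b i) p := Metric.infDist_le_dist_of_mem hpmem
    _ = ‖v‖ := by rw [dist_eq_norm, hpv]; congr 1; abel
    _ = lam := hnorm
end
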